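/- arXiv:1705.02160 — 2 statements merged into one kernel-verified Lean document; each statement's English description precedes it below -/
import Mathlib

section
/- The series defining the generalized k-Mittag-Leffler function E^{γ,q}_{k,α,β}(z) = Σ_{n=0}^∞ (γ)_{nq,k} z^n / (Γ_k(nα + β) · n!) converges absolutely for every z ∈ ℂ, provided k > 0, Re(α) > 0, Re(β) > 0, Re(γ) > 0, and q ∈ ℕ with q ≥ 1 and qk < Re(α) + k (in particular for q = 1). -/
open Finset

/-- The k-Pochhammer symbol `(γ)_{m,k} = ∏_{j=0}^{m-1} (γ + j k)`. -/
noncomputable def kPochhammer (x : ℂ) (k : ℝ) (m : ℕ) : ℂ :=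
  ∏ j ∈ Finset.range m, (x + (j : ℂ) * (k : ℂ))

/-- The k-gamma function `Γ_k(γ) = k^(γ/k - 1) Γ(γ/k)`. -/
noncomputable def kGamma (k : ℝ) (γ : ℂ) : ℂ :=
  (k : ℂ) ^ (γ / (k : ℂ) - 1) * Complex.Gamma (γ / (k : ℂ))

/-!
The terms are dominated by a real majorant. In the numerator `‖(γ)_{m,k}‖ ≤ (‖γ‖ + k)^m m!`.
In the denominator `Γ_k(nα + β) = k^(w - 1) Γ(w)` with `w = (nα + β)/k`, and Euler's limit
formula for `Γ`, compared factor by factor with its real counterpart, gives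
`‖Γ(w)‖ ≥ Γ(Re w) exp(-2 (Im w)² / Re w) ≥ Γ(Re w) e^(-Cn)`, since `Im w = O(n)` and `Re w ≍ n`.
It remains to sum `R^n (nq)! / (n! Γ(ns + t))` when `q < s + 1`. With `j = ⌊ns + t - 1⌋` we
have `Γ(ns + t) ≥ j!`, and writing `n + j = nq + d` gives `(nq)! d! ≤ (n + j)! ≤ 2^(n + j) n! j!`.
Since `d ≥ (s + 1 - q) n - O(1)` grows linearly, the terms are `O(B^n / d!)`, which is summable.
-/

open Filter
open scoped Nat

lemma sum_range_one_div_add_sq_le {x : ℝ} (hx : 1 ≤ x) (n : ℕ) :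
    ∑ j ∈ range n, 1 / (x + j) ^ 2 ≤ 2 / x := by
  have hx0 : 0 < x := by linarith
  calc ∑ j ∈ range n, 1 / (x + j) ^ 2
      ≤ ∑ j ∈ range n, 2 * (1 / (x + j) - 1 / (x + (j + 1 : ℕ))) := by
        refine sum_le_sum fun j _ => ?_
        have hj : 0 < x + j := by positivity
        push_cast
        rw [div_sub_div _ _ hj.ne' (by positivity), ← mul_div_assoc,
          div_le_div_iff₀ (by positivity) (by positivity)]
        nlinarith
    _ = 2 * (1 / x - 1 / (x + n)) := by
        rw [← mul_sum, sum_range_sub' (fun j : ℕ => 1 / (x + j))]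
        simp
    _ ≤ 2 / x := by
        have : 0 < 1 / (x + n) := by positivity
        rw [mul_sub, mul_one_div]
        linarith

lemma Complex.norm_le_re_mul_exp {u : ℂ} (hu : 0 < u.re) :
    ‖u‖ ≤ u.re * Real.exp (u.im ^ 2 / u.re ^ 2) := by
  set t := u.im ^ 2 / u.re ^ 2 with ht
  have hnorm : ‖u‖ ^ 2 = u.re ^ 2 * (1 + t) := by
    rw [Complex.sq_norm, Complex.normSq_apply, ht]
    field_simp
  have hexp : 1 + t ≤ Real.exp t ^ 2 := by
    nlinarith [Real.add_one_le_exp t, Real.one_le_exp (show 0 ≤ t by positivity)]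
  refine (pow_le_pow_iff_left₀ (norm_nonneg _) (by positivity) two_ne_zero).mp ?_
  rw [hnorm, mul_pow]
  gcongr

lemma Complex.Gamma_re_mul_exp_le_norm_Gamma {s : ℂ} (hs : 1 ≤ s.re) :
    Real.Gamma s.re * Real.exp (-(2 * s.im ^ 2 / s.re)) ≤ ‖Complex.Gamma s‖ := by
  have hpos : ∀ j : ℕ, 0 < s.re + j := fun j => by positivity
  have hprod : ∀ n : ℕ, ∏ j ∈ range (n + 1), ‖s + j‖ ≤
      (∏ j ∈ range (n + 1), (s.re + j)) * Real.exp (2 * s.im ^ 2 / s.re) := fun n =>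
    calc ∏ j ∈ range (n + 1), ‖s + j‖
        ≤ ∏ j ∈ range (n + 1), ((s.re + j) * Real.exp (s.im ^ 2 / (s.re + j) ^ 2)) :=
          prod_le_prod (fun _ _ => norm_nonneg _) fun j _ => by
            simpa using Complex.norm_le_re_mul_exp (u := s + j) (by simpa using hpos j)
      _ = (∏ j ∈ range (n + 1), (s.re + j)) *
            Real.exp (s.im ^ 2 * ∑ j ∈ range (n + 1), 1 / (s.re + j) ^ 2) := by
          simp only [prod_mul_distrib, ← Real.exp_sum, mul_sum, mul_one_div]
      _ ≤ (∏ j ∈ range (n + 1), (s.re + j)) * Real.exp (2 * s.im ^ 2 / s.re) := by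
          gcongr
          calc s.im ^ 2 * ∑ j ∈ range (n + 1), 1 / (s.re + j) ^ 2 ≤ s.im ^ 2 * (2 / s.re) := by
                gcongr; exact sum_range_one_div_add_sq_le hs _
            _ = 2 * s.im ^ 2 / s.re := by ring
  refine le_of_tendsto_of_tendsto ((Real.GammaSeq_tendsto_Gamma _).mul_const _)
    (Complex.GammaSeq_tendsto_Gamma s).norm ?_
  filter_upwards [eventually_gt_atTop 0] with n hn
  rw [Complex.GammaSeq, Real.GammaSeq, norm_div, norm_mul, Complex.norm_natCast_cpow_of_pos hn,
    norm_prod, Complex.norm_natCast, Real.exp_neg, ← div_eq_mul_inv, div_div]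
  gcongr
  · exact prod_pos fun j _ => (hpos j).trans_le (by simpa using Complex.re_le_norm (s + j))
  · exact hprod n

lemma exists_Gamma_re_mul_exp_le_norm_Gamma_mul_add {α β : ℂ} (hα : 0 < α.re) (hβ : 0 < β.re) :
    ∃ C : ℝ, ∀ᶠ n : ℕ in atTop,
      Real.Gamma (n * α.re + β.re) * Real.exp (-(C * n)) ≤ ‖Complex.Gamma (n * α + β)‖ := by
  set D := |α.im| + |β.im|
  refine ⟨2 * D ^ 2 / α.re, ?_⟩
  filter_upwards [eventually_ge_atTop 1, (tendsto_natCast_atTop_atTop.atTop_mul_const hα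
    |>.atTop_add tendsto_const_nhds (C := β.re)).eventually_ge_atTop 1] with n hn hre
  have hn' : (1 : ℝ) ≤ n := by exact_mod_cast hn
  have key := Complex.Gamma_re_mul_exp_le_norm_Gamma (s := n * α + β) (by simpa using hre)
  simp only [Complex.add_re, Complex.mul_re, Complex.natCast_re, Complex.natCast_im, zero_mul,
    sub_zero, Complex.add_im, Complex.mul_im, add_zero] at key
  refine le_trans (mul_le_mul_of_nonneg_left (Real.exp_le_exp.2 (neg_le_neg ?_))
    (Real.Gamma_pos_of_pos (by linarith)).le) key
  have him : |n * α.im + β.im| ≤ n * D := by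
    calc |n * α.im + β.im| ≤ n * |α.im| + |β.im| := by
          simpa [abs_mul] using abs_add_le (n * α.im) β.im
      _ ≤ n * D := by nlinarith [abs_nonneg β.im]
  calc 2 * (n * α.im + β.im) ^ 2 / (n * α.re + β.re) ≤ 2 * (n * D) ^ 2 / (n * α.re) := by
        rw [← sq_abs]
        gcongr
        linarith
    _ = 2 * D ^ 2 / α.re * n := by field_simp

lemma Nat.factorial_mul_factorial_le_two_pow_mul {a b c d : ℕ} (h : a + b = c + d) :
    a ! * b ! ≤ 2 ^ (c + d) * (c ! * d !) :=
  calc a ! * b ! ≤ (a + b)! := Nat.le_of_dvd (Nat.factorial_pos _)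
        (Nat.factorial_mul_factorial_dvd_factorial_add a b)
    _ = (c + d).choose d * (c ! * d !) := by
        rw [h, ← Nat.add_choose_mul_factorial_mul_factorial, Nat.mul_assoc]
    _ ≤ 2 ^ (c + d) * (c ! * d !) := Nat.mul_le_mul_right _ (Nat.choose_le_two_pow _ _)

lemma Real.factorial_floor_sub_one_le_Gamma {x : ℝ} (hx : 2 ≤ x) :
    (⌊x - 1⌋₊ ! : ℝ) ≤ Gamma x := by
  have hfloor : (1 : ℝ) ≤ ⌊x - 1⌋₊ := by exact_mod_cast Nat.le_floor (by norm_num; linarith)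
  rw [← Real.Gamma_nat_eq_factorial]
  exact Real.Gamma_strictMonoOn_Ici.monotoneOn (by rw [Set.mem_Ici]; linarith) hx
    (by linarith [Nat.floor_le (show 0 ≤ x - 1 by linarith)])

lemma summable_pow_div_factorial_of_linear_le {d : ℕ → ℕ} {B ε c : ℝ} (hB : 0 ≤ B) (hε : 0 < ε)
    (hd : ∀ᶠ n in atTop, ε * n - c ≤ d n) : Summable fun n => B ^ n / (d n)! := by
  obtain ⟨T, hT1, hT⟩ : ∃ T : ℝ, 1 ≤ T ∧ B * T ^ (-ε) < 1 := by
    have : Tendsto (fun T : ℝ => B * T ^ (-ε)) atTop (nhds 0) := by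
      simpa using (tendsto_rpow_neg_atTop hε).const_mul B
    exact ((eventually_ge_atTop 1).and (this.eventually_lt_const one_pos)).exists
  have hT0 : 0 < T := by linarith
  refine Summable.of_norm_bounded_eventually_nat
    ((summable_geometric_of_lt_one (by positivity) hT).mul_left (Real.exp T * T ^ c)) ?_
  filter_upwards [hd] with n hn
  have hfact : 1 / ((d n)! : ℝ) ≤ Real.exp T / T ^ d n := by
    rw [div_le_div_iff₀ (by positivity) (by positivity), one_mul]
    have := Real.pow_div_factorial_le_exp (x := T) hT0.le (d n)
    rwa [div_le_iff₀ (by positivity)] at this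
  have hpow : 1 / T ^ d n ≤ T ^ c * (T ^ (-ε)) ^ n := by
    rw [one_div, ← Real.rpow_natCast, ← Real.rpow_neg hT0.le, ← Real.rpow_natCast,
      ← Real.rpow_mul hT0.le, ← Real.rpow_add hT0]
    exact Real.rpow_le_rpow_of_exponent_le hT1 (by linarith)
  rw [Real.norm_of_nonneg (by positivity), div_eq_mul_one_div]
  calc B ^ n * (1 / (d n)!) ≤ B ^ n * (Real.exp T * (1 / T ^ d n)) := by
        rw [mul_one_div (Real.exp T)]; gcongr
    _ ≤ B ^ n * (Real.exp T * (T ^ c * (T ^ (-ε)) ^ n)) := by gcongr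
    _ = Real.exp T * T ^ c * (B * T ^ (-ε)) ^ n := by ring

lemma summable_pow_mul_factorial_div_factorial_mul_Gamma (q : ℕ) {s : ℝ} (t : ℝ) {R : ℝ}
    (hR : 0 ≤ R) (hs : 0 < s) (hsq : (q : ℝ) < s + 1) :
    Summable fun n : ℕ => R ^ n * (n * q)! / (n ! * Real.Gamma (n * s + t)) := by
  set j : ℕ → ℕ := fun n => ⌊n * s + t - 1⌋₊
  have hlarge : ∀ᶠ n : ℕ in atTop, 2 ≤ n * s + t ∧ 2 - t ≤ (s + 1 - q) * n := by
    have h1 := (tendsto_natCast_atTop_atTop.atTop_mul_const hs).atTop_add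
      (tendsto_const_nhds (x := t))
    have h2 := tendsto_natCast_atTop_atTop.const_mul_atTop (show 0 < s + 1 - q by linarith)
    exact (h1.eventually_ge_atTop 2).and (h2.eventually_ge_atTop (2 - t))
  have hsplit : ∀ᶠ n : ℕ in atTop, (n * q + (n + j n - n * q) = n + j n) ∧
      (s + 1 - q) * n - (2 - t) ≤ ((n + j n - n * q : ℕ) : ℝ) ∧ (j n : ℝ) ≤ n * s + t - 1 := by
    filter_upwards [hlarge] with n ⟨hx, hε⟩
    have hJ1 : (j n : ℝ) ≤ n * s + t - 1 := Nat.floor_le (by linarith)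
    have hJ2 : n * s + t - 1 - 1 < j n := Nat.sub_one_lt_floor _
    have hqJ : n * q ≤ n + j n := by exact_mod_cast (show (n * q : ℝ) ≤ n + j n by nlinarith)
    refine ⟨Nat.add_sub_cancel' hqJ, ?_, hJ1⟩
    push_cast [hqJ]
    nlinarith
  refine Summable.of_norm_bounded_eventually_nat ((summable_pow_div_factorial_of_linear_le
    (B := 2 ^ (1 + s) * R) (by positivity) (by linarith : 0 < s + 1 - q)
    (hsplit.mono fun n hn => hn.2.1)).mul_left (2 ^ t)) ?_
  filter_upwards [hlarge, hsplit] with n ⟨hx, _⟩ ⟨hsum, _, hJ⟩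
  set d := n + j n - n * q
  have hfact : ((n * q)! : ℝ) / (n ! * (j n)!) ≤ 2 ^ (n + j n) / d ! := by
    rw [div_le_div_iff₀ (by positivity) (by positivity)]
    exact_mod_cast (Nat.factorial_mul_factorial_le_two_pow_mul hsum).trans_eq (by ring)
  have hpow : (2 : ℝ) ^ (n + j n) ≤ 2 ^ t * (2 ^ (1 + s)) ^ n := by
    rw [← Real.rpow_natCast, ← Real.rpow_natCast, ← Real.rpow_mul zero_le_two,
      ← Real.rpow_add zero_lt_two]
    exact Real.rpow_le_rpow_of_exponent_le one_le_two (by push_cast; linarith)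
  rw [Real.norm_of_nonneg (by positivity [Real.Gamma_pos_of_pos (by linarith : 0 < n * s + t)])]
  calc R ^ n * (n * q)! / (n ! * Real.Gamma (n * s + t))
      ≤ R ^ n * (n * q)! / (n ! * (j n)!) := by
        gcongr
        exact Real.factorial_floor_sub_one_le_Gamma hx
    _ = R ^ n * (((n * q)! : ℝ) / (n ! * (j n)!)) := by ring
    _ ≤ R ^ n * (2 ^ t * (2 ^ (1 + s)) ^ n / d !) := mul_le_mul_of_nonneg_left
        (hfact.trans (div_le_div_of_nonneg_right hpow (by positivity))) (by positivity)
    _ = 2 ^ t * ((2 ^ (1 + s) * R) ^ n / d !) := by ring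

lemma norm_kPochhammer_le (γ : ℂ) {k : ℝ} (hk : 0 < k) (m : ℕ) :
    ‖kPochhammer γ k m‖ ≤ (‖γ‖ + k) ^ m * m ! := by
  rw [kPochhammer, norm_prod]
  calc ∏ j ∈ range m, ‖γ + j * k‖ ≤ ∏ j ∈ range m, (‖γ‖ + k) * ((j + 1 : ℕ) : ℝ) :=
        prod_le_prod (fun _ _ => norm_nonneg _) fun j _ => by
          have := norm_add_le γ (j * k)
          simp only [norm_mul, Complex.norm_natCast, Complex.norm_real, Real.norm_of_nonneg hk.le]
            at this
          push_cast
          nlinarith [norm_nonneg γ]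
    _ = (‖γ‖ + k) ^ m * m ! := by
        rw [prod_mul_distrib, prod_const, card_range, ← Nat.cast_prod,
          prod_range_add_one_eq_factorial]

lemma exists_le_norm_kGamma_mul_add {k : ℝ} (hk : 0 < k) {α β : ℂ} (hα : 0 < α.re)
    (hβ : 0 < β.re) : ∃ C : ℝ, ∀ᶠ n : ℕ in atTop,
      k ^ (n * (α.re / k) + β.re / k - 1) *
        (Real.Gamma (n * (α.re / k) + β.re / k) * Real.exp (-(C * n))) ≤
      ‖kGamma k (n * α + β)‖ := by
  obtain ⟨C, hC⟩ := exists_Gamma_re_mul_exp_le_norm_Gamma_mul_add (α := α / k) (β := β / k)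
    (by simpa using div_pos hα hk) (by simpa using div_pos hβ hk)
  refine ⟨C, hC.mono fun n hn => ?_⟩
  have hw : ((n : ℂ) * α + β) / k = n * (α / k) + β / k := by ring
  rw [kGamma, norm_mul, Complex.norm_cpow_eq_rpow_re_of_pos hk, hw]
  simp only [Complex.div_ofReal_re] at hn
  have hre : ((n : ℂ) * (α / k) + β / k - 1).re = n * (α.re / k) + β.re / k - 1 := by
    simp [Complex.div_ofReal_re]
  rw [hre]
  exact mul_le_mul_of_nonneg_left hn (by positivity)

theorem kMittagLeffler_summable_general (k : ℝ) (α β γ : ℂ) (q : ℕ) (z : ℂ)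
    (hk : 0 < k) (hα : 0 < α.re) (hβ : 0 < β.re)
    (hqk : (q : ℝ) * k < α.re + k) :
    Summable fun n : ℕ =>
      ‖kPochhammer γ k (n * q) * z ^ n / (kGamma k ((n : ℂ) * α + β) * (n.factorial : ℂ))‖ := by
  set s := α.re / k
  set t := β.re / k
  obtain ⟨C, hC⟩ := exists_le_norm_kGamma_mul_add hk hα hβ
  set R := (‖γ‖ + k) ^ q * ‖z‖ * Real.exp C / k ^ s
  have hsq : (q : ℝ) < s + 1 := by rw [div_add_one hk.ne', lt_div_iff₀ hk]; linarith
  refine Summable.of_norm_bounded_eventually_nat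
    ((summable_pow_mul_factorial_div_factorial_mul_Gamma q t (R := R) (by positivity)
      (by positivity) hsq).mul_left (k ^ (t - 1))⁻¹) ?_
  filter_upwards [hC] with n hn
  have hk_pow : k ^ (n * s + t - 1) = k ^ (t - 1) * (k ^ s) ^ n := by
    rw [← Real.rpow_natCast, ← Real.rpow_mul hk.le, ← Real.rpow_add hk]
    ring_nf
  have hexp : Real.exp (-(C * n)) = (Real.exp C ^ n)⁻¹ := by
    rw [Real.exp_neg, mul_comm, Real.exp_nat_mul]
  have hΓ : 0 < Real.Gamma (n * s + t) := Real.Gamma_pos_of_pos (by positivity)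
  rw [norm_norm, norm_div, norm_mul, norm_mul, norm_pow, Complex.norm_natCast]
  calc ‖kPochhammer γ k (n * q)‖ * ‖z‖ ^ n / (‖kGamma k (n * α + β)‖ * n !)
      ≤ (‖γ‖ + k) ^ (n * q) * (n * q)! * ‖z‖ ^ n /
          (k ^ (n * s + t - 1) * (Real.Gamma (n * s + t) * Real.exp (-(C * n))) * n !) := by
        gcongr
        exact norm_kPochhammer_le γ hk _
    _ = (k ^ (t - 1))⁻¹ * (R ^ n * (n * q)! / (n ! * Real.Gamma (n * s + t))) := by
        rw [hk_pow, hexp, pow_mul', div_pow, mul_pow, mul_pow]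
        field_simp

/-- Absolute convergence of the series defining the generalized k-Mittag-Leffler function. -/
theorem kMittagLeffler_summable (k : ℝ) (α β γ : ℂ) (q : ℕ) (z : ℂ)
    (hk : 0 < k) (hα : 0 < α.re) (hβ : 0 < β.re) (hγ : 0 < γ.re)
    (hq : 1 ≤ q) (hqk : (q : ℝ) * k < α.re + k) :
    Summable fun n : ℕ =>
      ‖kPochhammer γ k (n * q) * z ^ n / (kGamma k ((n : ℂ) * α + β) * (n.factorial : ℂ))‖ :=
  kMittagLeffler_summable_general k α β γ q z hk hα hβ hqk
end

section
/- For ν > 0, the function t ↦ Σ_{k=0}^∞ (-1)^k (ct)^{νk} / Γ(νk + 1) (i.e., t ↦ E_ν(-(ct)^ν)), multiplied by N₀, satisfies the fractional integral equation N(t) - N₀ = -c^ν · (₀D_t^{-ν} N)(t) for t > 0, where ₀D_t^{-ν} is the Riemann–Liouville fractional integral. -/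
/-!
Term by term, the Riemann–Liouville integral of order `ν` sends `s ^ (ν k)` to
`Γ(ν k + 1) / Γ(ν k + ν + 1) · t ^ (ν k + ν)` (a Beta integral), so it shifts the Mittag-Leffler
series by one index: `x · I^ν[E_ν(x s^ν)](t) = E_ν(x t^ν) - 1`; with `x = -c^ν` this is the
kinetic equation. Sum and integral may be interchanged because the series converges absolutely,
by the ratio test and the log-convexity bound `Γ(y) (y - 1)^ν ≤ Γ(y + ν)`.
-/

open MeasureTheory intervalIntegral Filter Set

/-- Riemann–Liouville fractional integral of order ν. -/
noncomputable def rlInt (ν : ℝ) (f : ℝ → ℝ) (t : ℝ) : ℝ :=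
  (1 / Real.Gamma ν) * ∫ s in (0 : ℝ)..t, (t - s) ^ (ν - 1) * f s

theorem Real.integral_rpow_mul_sub_rpow {u v t : ℝ} (hu : 0 < u) (hv : 0 < v) (ht : 0 < t) :
    ∫ s in (0 : ℝ)..t, s ^ (u - 1) * (t - s) ^ (v - 1) =
      t ^ (u + v - 1) * (Real.Gamma u * Real.Gamma v / Real.Gamma (u + v)) := by
  have h := Complex.betaIntegral_scaled u v ht
  rw [Complex.betaIntegral_eq_Gamma_mul_div _ _ (by simpa) (by simpa)] at h
  apply Complex.ofReal_injective
  rw [← intervalIntegral.integral_ofReal]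
  convert h using 1
  · refine intervalIntegral.integral_congr fun x hx => ?_
    rw [uIcc_of_le ht.le] at hx
    push_cast [Complex.ofReal_cpow hx.1, Complex.ofReal_cpow (sub_nonneg.2 hx.2)]
    rfl
  · push_cast [Complex.ofReal_cpow ht.le, ← Complex.Gamma_ofReal]
    rfl

theorem Real.Gamma_mul_sub_one_rpow_le_Gamma_add {y ν : ℝ} (hy : 1 < y) (hν : 0 < ν) :
    Real.Gamma y * (y - 1) ^ ν ≤ Real.Gamma (y + ν) := by
  have hslope := Real.convexOn_log_Gamma.slope_mono_adjacent (x := y - 1) (y := y) (z := y + ν)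
    (mem_Ioi.2 (by linarith)) (mem_Ioi.2 (by linarith)) (by linarith) (by linarith)
  have hrec : Real.Gamma y = (y - 1) * Real.Gamma (y - 1) := by
    simpa using Real.Gamma_add_one (s := y - 1) (by linarith)
  have hΓ : 0 < Real.Gamma (y - 1) := Real.Gamma_pos_of_pos (by linarith)
  simp only [Function.comp, sub_sub_cancel, div_one, add_sub_cancel_left, le_div_iff₀ hν] at hslope
  rw [← Real.log_le_log_iff (by positivity) (Real.Gamma_pos_of_pos (by linarith)),
    Real.log_mul (by positivity) (by positivity), Real.log_rpow (by linarith)]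
  rw [hrec, Real.log_mul (by linarith) hΓ.ne'] at hslope ⊢
  linarith

theorem summable_pow_div_Gamma_mul_add {ν : ℝ} (hν : 0 < ν) (b x : ℝ) :
    Summable fun k : ℕ => x ^ k / Real.Gamma (ν * k + b) := by
  refine summable_of_ratio_norm_eventually_le (r := 1 / 2) (by norm_num) ?_
  have hlin : Tendsto (fun k : ℕ => ν * k + b - 1) atTop atTop :=
    tendsto_atTop_add_const_right _ _
      (tendsto_atTop_add_const_right _ _ (tendsto_natCast_atTop_atTop.const_mul_atTop hν))
  filter_upwards [hlin.eventually_gt_atTop 0,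
    ((tendsto_rpow_atTop hν).comp hlin).eventually_ge_atTop (2 * |x|)] with k hk hk2
  set y := ν * k + b
  have hΓ : 0 < Real.Gamma y := Real.Gamma_pos_of_pos (by linarith)
  have hpow : 0 < (y - 1) ^ ν := Real.rpow_pos_of_pos hk ν
  have hΓ_succ : Real.Gamma y * (y - 1) ^ ν ≤ Real.Gamma (ν * ↑(k + 1) + b) := by
    rw [show ν * ↑(k + 1) + b = y + ν by push_cast; ring]
    exact Real.Gamma_mul_sub_one_rpow_le_Gamma_add (by linarith) hν
  have hΓ_succ_pos := (mul_pos hΓ hpow).trans_le hΓ_succ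
  rw [norm_div, norm_div, norm_pow, norm_pow, Real.norm_of_nonneg hΓ.le,
    Real.norm_of_nonneg hΓ_succ_pos.le, Real.norm_eq_abs, pow_succ]
  calc |x| ^ k * |x| / Real.Gamma (ν * ↑(k + 1) + b)
      ≤ |x| ^ k * |x| / (Real.Gamma y * (y - 1) ^ ν) := by gcongr
    _ = |x| / (y - 1) ^ ν * (|x| ^ k / Real.Gamma y) := by field_simp
    _ ≤ 1 / 2 * (|x| ^ k / Real.Gamma y) := by
        refine mul_le_mul_of_nonneg_right ((div_le_iff₀ hpow).2 ?_) (by positivity)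
        simp only [Function.comp] at hk2
        linarith

section rlInt

variable {ν t : ℝ}

theorem rlInt_congr {f g : ℝ → ℝ} (ht : 0 ≤ t) (h : EqOn f g (Icc 0 t)) :
    rlInt ν f t = rlInt ν g t := by
  unfold rlInt
  congr 1
  refine integral_congr fun s hs => ?_
  rw [uIcc_of_le ht] at hs
  simp only [h hs]

theorem rlInt_const_mul (a : ℝ) (f : ℝ → ℝ) : rlInt ν (fun s => a * f s) t = a * rlInt ν f t := by
  simp only [rlInt, mul_left_comm _ a, intervalIntegral.integral_const_mul]

theorem rlInt_rpow {p : ℝ} (hν : 0 < ν) (hp : -1 < p) (ht : 0 < t) :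
    rlInt ν (fun s => s ^ p) t = Real.Gamma (p + 1) / Real.Gamma (p + 1 + ν) * t ^ (p + ν) := by
  have h := Real.integral_rpow_mul_sub_rpow (u := p + 1) (by linarith) hν ht
  rw [add_sub_cancel_right, show p + 1 + ν - 1 = p + ν by ring] at h
  have hΓ := (Real.Gamma_pos_of_pos hν).ne'
  rw [rlInt]
  simp_rw [mul_comm ((t - _) ^ (ν - 1))]
  rw [h]
  field_simp

theorem intervalIntegrable_sub_rpow_mul (hν : 0 < ν) {g : ℝ → ℝ} (hg : ContinuousOn g (uIcc 0 t)) :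
    IntervalIntegrable (fun s => (t - s) ^ (ν - 1) * g s) volume 0 t := by
  have h := (intervalIntegral.intervalIntegrable_rpow' (a := 0) (b := t)
    (show -1 < ν - 1 by linarith)).comp_sub_left t
  rw [sub_zero, sub_self] at h
  exact h.symm.mul_continuousOn hg

theorem rlInt_tsum (hν : 0 < ν) (ht : 0 ≤ t) {f : ℕ → ℝ → ℝ}
    (hf : ∀ k, IntervalIntegrable (fun s => (t - s) ^ (ν - 1) * f k s) volume 0 t)
    (hsum : Summable fun k => rlInt ν (fun s => |f k s|) t) :
    rlInt ν (fun s => ∑' k, f k s) t = ∑' k, rlInt ν (f k) t := by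
  simp only [rlInt, tsum_mul_left, integral_of_le ht]
  congr 1
  simp_rw [← tsum_mul_left]
  refine (integral_tsum_of_summable_integral_norm (fun k => (hf k).1) ?_).symm
  refine (hsum.mul_left (Real.Gamma ν)).congr fun k => ?_
  rw [rlInt, ← mul_assoc, mul_one_div_cancel (Real.Gamma_pos_of_pos hν).ne', one_mul,
    integral_of_le ht]
  refine setIntegral_congr_fun measurableSet_Ioc fun s hs => ?_
  rw [norm_mul, Real.norm_of_nonneg (Real.rpow_nonneg (sub_nonneg.2 hs.2) _), Real.norm_eq_abs]

end rlInt

noncomputable def mittagLeffler (α z : ℝ) : ℝ := ∑' k : ℕ, z ^ k / Real.Gamma (α * k + 1)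

section mittagLeffler

variable {ν t : ℝ}

theorem pow_div_Gamma_mul_rlInt_rpow (hν : 0 < ν) (ht : 0 < t) (x : ℝ) (k : ℕ) :
    x ^ k / Real.Gamma (ν * k + 1) * rlInt ν (fun s => s ^ (ν * k)) t =
      t ^ ν * ((x * t ^ ν) ^ k / Real.Gamma (ν * k + (ν + 1))) := by
  have hΓ := (Real.Gamma_pos_of_pos (show 0 < ν * k + 1 by positivity)).ne'
  rw [rlInt_rpow hν (by nlinarith [k.cast_nonneg (α := ℝ)]) ht, add_assoc, add_comm 1 ν, mul_pow,
    ← Real.rpow_natCast (t ^ ν), ← Real.rpow_mul ht.le, Real.rpow_add ht]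
  field_simp

theorem mul_rlInt_mittagLeffler (hν : 0 < ν) (ht : 0 < t) (x : ℝ) :
    x * rlInt ν (fun s => mittagLeffler ν (x * s ^ ν)) t = mittagLeffler ν (x * t ^ ν) - 1 := by
  have hseries : EqOn (fun s => mittagLeffler ν (x * s ^ ν))
      (fun s => ∑' k : ℕ, x ^ k / Real.Gamma (ν * k + 1) * s ^ (ν * k)) (Icc 0 t) := by
    intro s hs
    refine tsum_congr fun k => ?_
    rw [mul_pow, ← Real.rpow_natCast (s ^ ν), ← Real.rpow_mul hs.1]
    ring
  have hint (k : ℕ) : IntervalIntegrable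
      (fun s => (t - s) ^ (ν - 1) * (x ^ k / Real.Gamma (ν * k + 1) * s ^ (ν * k))) volume 0 t :=
    intervalIntegrable_sub_rpow_mul hν
      (continuous_const.mul (Real.continuous_rpow_const (by positivity))).continuousOn
  have habs (k : ℕ) : rlInt ν (fun s => |x ^ k / Real.Gamma (ν * k + 1) * s ^ (ν * k)|) t =
      t ^ ν * ((|x| * t ^ ν) ^ k / Real.Gamma (ν * k + (ν + 1))) := by
    rw [← pow_div_Gamma_mul_rlInt_rpow hν ht, ← rlInt_const_mul]
    refine rlInt_congr ht.le fun s hs => ?_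
    rw [abs_mul, abs_div, abs_pow, abs_of_pos (Real.Gamma_pos_of_pos (by positivity)),
      abs_of_nonneg (Real.rpow_nonneg hs.1 _)]
  have hsum := (summable_pow_div_Gamma_mul_add hν (ν + 1) (|x| * t ^ ν)).mul_left (t ^ ν)
  have hterm (k : ℕ) : x * (t ^ ν * ((x * t ^ ν) ^ k / Real.Gamma (ν * k + (ν + 1)))) =
      (x * t ^ ν) ^ (k + 1) / Real.Gamma (ν * ↑(k + 1) + 1) := by
    rw [show ν * ↑(k + 1) + 1 = ν * k + (ν + 1) by push_cast; ring, pow_succ]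
    ring
  rw [rlInt_congr ht.le hseries, rlInt_tsum hν ht.le hint (hsum.congr fun k => (habs k).symm),
    ← tsum_mul_left, mittagLeffler, (summable_pow_div_Gamma_mul_add hν 1 _).tsum_eq_zero_add]
  simp only [rlInt_const_mul, pow_div_Gamma_mul_rlInt_rpow hν ht, hterm, Nat.cast_zero, mul_zero,
    zero_add, pow_zero, Real.Gamma_one, div_one, add_sub_cancel_left]

end mittagLeffler

theorem mittagLeffler_solves_kinetic (ν c N₀ : ℝ) (hν : 0 < ν) (hc : 0 < c)
    (N : ℝ → ℝ)
    (hN : ∀ t : ℝ, N t = N₀ * ∑' k : ℕ, (-1) ^ k * (c * t) ^ (ν * k) / Real.Gamma (ν * k + 1)) :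
    ∀ t : ℝ, 0 < t → N t - N₀ = -(c ^ ν) * rlInt ν N t := by
  intro t ht
  have hN_eq (s : ℝ) (hs : 0 ≤ s) : N s = N₀ * mittagLeffler ν (-c ^ ν * s ^ ν) := by
    rw [hN s, mittagLeffler]
    congr 1
    refine tsum_congr fun k => ?_
    rw [Real.mul_rpow hc.le hs, Real.rpow_mul hc.le, Real.rpow_mul hs, Real.rpow_natCast,
      Real.rpow_natCast]
    ring
  rw [rlInt_congr ht.le fun s hs => hN_eq s hs.1, rlInt_const_mul, hN_eq t ht.le, mul_left_comm,
    mul_rlInt_mittagLeffler hν ht]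
  ring
end
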